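/- arXiv:1304.7587 — 5 statements merged into one kernel-verified Lean document; each statement's English description precedes it below -/
import Mathlib

section
/- Let d and n be integers with d ≥ 4 and n ≥ 6d² − 16d + 13. Then every complex root a of the Ehrhart polynomial i(Δ(d,n), z) satisfies Re(a) < 1. -/
/-- `f_{n,s}(z) = C(n,s) · ∏_{j=1}^{n−1} ((d−s)·z + j − s)`. -/
noncomputable def hyperF (d n s : ℕ) (z : ℂ) : ℂ :=
  (n.choose s : ℂ) * ∏ j ∈ Finset.Icc 1 (n - 1), (((d : ℂ) - (s : ℂ)) * z + (j : ℂ) - (s : ℂ))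

/-- The Ehrhart polynomial of the hypersimplex `Δ(d,n)`:
`i(Δ(d,n), z) = (1/(n−1)!) · Σ_{s=0}^{d−1} (−1)^s · f_{n,s}(z)`. -/
noncomputable def ehrhartPoly (d n : ℕ) (z : ℂ) : ℂ :=
  (1 / ((n - 1).factorial : ℂ)) * ∑ s ∈ Finset.range d, (-1) ^ s * hyperF d n s z

/-!
Suppose `Re z ≥ 1`. Compare each factor `(d - s) z + j - s` of `f_{n,s}(z)` with the factor
`d z + j` of `f_{n,0}(z)`: the ratio of their moduli is at most `1` for `j < s`, `(d - s)/d` for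
`s ≤ j ≤ d` and `(d + j - 2s)/(d + j)` for `j > d`, and the last ratios telescope to a quotient of
descending factorials. With `C(n,s) ≤ n^s/s!` this gives
`|f_{n,s}(z)| ≤ ((d - s)/d)^(d+1-s) u^s/s! · |f_{n,0}(z)|` where `u = 4d²n/(n - d + 2)²`.
The bound on `n` makes `u ≤ 8/5` for `d = 4` and `u ≤ 4/3` for `d ≥ 5`, and then these weights sum
to less than `1` over `1 ≤ s < d`, so the term `s = 0` cannot be cancelled by the others.
-/

open Finset Real

theorem Complex.norm_le_mul_norm_of_abs_re_le_of_abs_im_le {p q : ℂ} {t : ℝ} (ht : 0 ≤ t)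
    (hre : |p.re| ≤ t * |q.re|) (him : |p.im| ≤ t * |q.im|) : ‖p‖ ≤ t * ‖q‖ := by
  rw [← pow_le_pow_iff_left₀ (norm_nonneg p) (by positivity) two_ne_zero, mul_pow,
    Complex.sq_norm, Complex.sq_norm, Complex.normSq_apply, Complex.normSq_apply]
  have hre2 := pow_le_pow_left₀ (abs_nonneg _) hre 2
  have him2 := pow_le_pow_left₀ (abs_nonneg _) him 2
  rw [sq_abs, mul_pow, sq_abs] at hre2 him2
  nlinarith

lemma Finset.prod_le_prod_mul_prod {ι : Type*} {S : Finset ι} {f g r : ι → ℝ}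
    (hf : ∀ i ∈ S, 0 ≤ f i) (h : ∀ i ∈ S, f i ≤ r i * g i) :
    ∏ i ∈ S, f i ≤ (∏ i ∈ S, r i) * ∏ i ∈ S, g i := by
  rw [← prod_mul_distrib]
  exact prod_le_prod hf h

lemma prod_Ioc_add_sub_div_add (c m : ℕ) {a b : ℕ} (hab : a ≤ b) (hm : m ≤ c + a) :
    ∏ j ∈ Ioc a b, (((c : ℝ) + j - m) / (c + j)) =
      (c + a).descFactorial m / (c + b).descFactorial m := by
  induction b, hab using Nat.le_induction with
  | base =>
    rw [Ioc_self, prod_empty, div_self]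
    exact_mod_cast (Nat.descFactorial_pos.2 hm).ne'
  | succ b hab ih =>
    have hstep : ((c : ℝ) + b + 1 - m) * (c + b + 1).descFactorial m =
        (c + b + 1) * (c + b).descFactorial m := by
      have h := Nat.succ_descFactorial (c + b) m
      rw [← Nat.cast_inj (R := ℝ), Nat.cast_mul, Nat.cast_sub (by omega)] at h
      push_cast at h
      exact h
    have hpos : (0 : ℝ) < (c + b).descFactorial m := by
      exact_mod_cast Nat.descFactorial_pos.2 (by omega)
    have hpos' : (0 : ℝ) < (c + b + 1).descFactorial m := by
      exact_mod_cast Nat.descFactorial_pos.2 (by omega)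
    rw [prod_Ioc_succ_top hab, ih, ← add_assoc, div_mul_div_comm,
      div_eq_div_iff (by positivity) hpos'.ne']
    push_cast
    linear_combination (((c + a).descFactorial m : ℕ) : ℝ) * hstep

lemma prod_Ioc_add_sub_div_add_le (c m : ℕ) {a b : ℕ} (hab : a ≤ b) (hm : m ≤ c + a) :
    ∏ j ∈ Ioc a b, (((c : ℝ) + j - m) / (c + j)) ≤
      ((c : ℝ) + a) ^ m / ((c : ℝ) + b + 1 - m) ^ m := by
  rw [prod_Ioc_add_sub_div_add c m hab hm]
  have hnum : ((c + a).descFactorial m : ℝ) ≤ ((c : ℝ) + a) ^ m := by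
    exact_mod_cast Nat.descFactorial_le_pow (c + a) m
  have hden : ((c : ℝ) + b + 1 - m) ^ m ≤ (c + b).descFactorial m := by
    have h := Nat.pow_sub_le_descFactorial (c + b) m
    rw [← Nat.cast_le (α := ℝ), Nat.cast_pow, Nat.cast_sub (by omega)] at h
    push_cast at h
    exact h
  have hpos : (0 : ℝ) < ((c : ℝ) + b + 1 - m) ^ m := by
    have : (m : ℝ) ≤ c + a := by exact_mod_cast hm
    have : (a : ℝ) ≤ b := by exact_mod_cast hab
    exact pow_pos (by linarith) m
  exact div_le_div₀ (by positivity) hnum hpos hden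

section Factors

variable {d s j : ℕ} {z : ℂ}

lemma norm_factor_le_mul_of_re_le {t : ℝ} (ht : 0 ≤ t) (hz : 0 ≤ z.re) (hsd : s ≤ d)
    (hre : |((d : ℝ) - s) * z.re + j - s| ≤ t * (d * z.re + j)) (him : (d : ℝ) - s ≤ t * d) :
    ‖((d : ℂ) - s) * z + j - s‖ ≤ t * ‖(d : ℂ) * z + j‖ := by
  have hsd : (s : ℝ) ≤ d := by exact_mod_cast hsd
  apply Complex.norm_le_mul_norm_of_abs_re_le_of_abs_im_le ht
  · simpa [abs_of_nonneg (by positivity : (0 : ℝ) ≤ d * z.re + j)] using hre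
  · simp only [Complex.sub_im, Complex.add_im, Complex.mul_im, Complex.sub_re,
      Complex.natCast_re, Complex.natCast_im, zero_mul, add_zero, sub_zero, abs_mul,
      abs_of_nonneg (sub_nonneg.2 hsd), Nat.abs_cast, ← mul_assoc]
    exact mul_le_mul_of_nonneg_right him (abs_nonneg _)

lemma norm_factor_le (hz : 1 ≤ z.re) (hsd : s ≤ d) :
    ‖((d : ℂ) - s) * z + j - s‖ ≤ ‖(d : ℂ) * z + j‖ := by
  have hsd' : (s : ℝ) ≤ d := by exact_mod_cast hsd
  have hs : (0 : ℝ) ≤ s := s.cast_nonneg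
  have hj : (0 : ℝ) ≤ j := j.cast_nonneg
  simpa using norm_factor_le_mul_of_re_le (t := 1) zero_le_one (by linarith) hsd
    (abs_le.2 ⟨by nlinarith, by nlinarith⟩) (by linarith)

lemma norm_factor_le_of_le_of_le (hz : 1 ≤ z.re) (hsj : s ≤ j) (hjd : j ≤ d) (hd : 0 < d) :
    ‖((d : ℂ) - s) * z + j - s‖ ≤ ((d : ℝ) - s) / d * ‖(d : ℂ) * z + j‖ := by
  have hsj' : (s : ℝ) ≤ j := by exact_mod_cast hsj
  have hjd' : (j : ℝ) ≤ d := by exact_mod_cast hjd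
  have hd' : (0 : ℝ) < d := by exact_mod_cast hd
  apply norm_factor_le_mul_of_re_le (div_nonneg (by linarith) hd'.le) (by linarith)
    (hsj.trans hjd)
  · rw [abs_of_nonneg (by nlinarith), div_mul_eq_mul_div, le_div_iff₀ hd']
    nlinarith
  · rw [div_mul_cancel₀ _ hd'.ne']

lemma norm_factor_le_of_lt (hz : 1 ≤ z.re) (hsd : s ≤ d) (hdj : d < j) :
    ‖((d : ℂ) - s) * z + j - s‖ ≤ ((d : ℝ) + j - 2 * s) / (d + j) * ‖(d : ℂ) * z + j‖ := by
  have hsd' : (s : ℝ) ≤ d := by exact_mod_cast hsd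
  have hdj' : (d : ℝ) < j := by exact_mod_cast hdj
  have hs : (0 : ℝ) ≤ s := s.cast_nonneg
  have hdj0 : (0 : ℝ) < d + j := by linarith
  apply norm_factor_le_mul_of_re_le (div_nonneg (by linarith) hdj0.le) (by linarith) hsd
  · rw [abs_of_nonneg (by nlinarith), div_mul_eq_mul_div, le_div_iff₀ hdj0]
    nlinarith [mul_nonneg (mul_nonneg hs (sub_nonneg.2 hdj'.le)) (sub_nonneg.2 hz)]
  · rw [div_mul_eq_mul_div, le_div_iff₀ hdj0]
    nlinarith

lemma prod_Ioc_norm_factor_le {n : ℕ} (hz : 1 ≤ z.re) (hsd : s < d) (hdn : d < n) :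
    ∏ j ∈ Ioc d (n - 1), ‖((d : ℂ) - s) * z + j - s‖ ≤
      (2 * d / ((n : ℝ) - d + 2)) ^ (2 * s) * ∏ j ∈ Ioc d (n - 1), ‖(d : ℂ) * z + j‖ := by
  have hratio := prod_le_prod_mul_prod (S := Ioc d (n - 1))
    (r := fun j ↦ ((d : ℝ) + j - (2 * s : ℕ)) / (d + j)) (fun _ _ ↦ norm_nonneg _)
    fun j hj ↦ by
      push_cast
      exact norm_factor_le_of_lt hz hsd.le (mem_Ioc.1 hj).1
  refine hratio.trans (mul_le_mul_of_nonneg_right ?_ (prod_nonneg fun _ _ ↦ norm_nonneg _))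
  refine (prod_Ioc_add_sub_div_add_le d (2 * s) (by omega) (by omega)).trans ?_
  have hnd : (0 : ℝ) < n - d + 2 := by
    have : (d : ℝ) < n := by exact_mod_cast hdn
    linarith
  have hsd' : (s : ℝ) + 1 ≤ d := by exact_mod_cast hsd
  rw [Nat.cast_sub (by omega), Nat.cast_mul, Nat.cast_one, Nat.cast_ofNat, ← two_mul, div_pow]
  gcongr
  linarith

lemma prod_Icc_norm_factor_le {n : ℕ} (hz : 1 ≤ z.re) (hs : 1 ≤ s) (hsd : s < d) (hdn : d < n) :
    ∏ j ∈ Icc 1 (n - 1), ‖((d : ℂ) - s) * z + j - s‖ ≤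
      (((d : ℝ) - s) / d) ^ (d + 1 - s) * (2 * d / ((n : ℝ) - d + 2)) ^ (2 * s) *
        ∏ j ∈ Icc 1 (n - 1), ‖(d : ℂ) * z + j‖ := by
  set F : ℕ → ℝ := fun j ↦ ‖((d : ℂ) - s) * z + j - s‖
  set G : ℕ → ℝ := fun j ↦ ‖(d : ℂ) * z + j‖
  have hsplit (H : ℕ → ℝ) : ∏ j ∈ Icc 1 (n - 1), H j =
      (∏ j ∈ Ioc 0 (s - 1), H j) * (∏ j ∈ Ioc (s - 1) d, H j) * ∏ j ∈ Ioc d (n - 1), H j := by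
    rw [← zero_add 1, Icc_add_one_left_eq_Ioc, prod_Ioc_consecutive H (Nat.zero_le _) (by omega),
      prod_Ioc_consecutive H (Nat.zero_le _) (by omega)]
  have hds : (0 : ℝ) ≤ (d - s) / d := div_nonneg (by simp [hsd.le]) d.cast_nonneg
  have hlow : ∏ j ∈ Ioc 0 (s - 1), F j ≤ ∏ j ∈ Ioc 0 (s - 1), G j :=
    prod_le_prod (fun _ _ ↦ norm_nonneg _) fun j _ ↦ norm_factor_le hz hsd.le
  have hmid : ∏ j ∈ Ioc (s - 1) d, F j ≤
      (((d : ℝ) - s) / d) ^ (d + 1 - s) * ∏ j ∈ Ioc (s - 1) d, G j := by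
    have h := prod_le_prod_mul_prod (S := Ioc (s - 1) d) (r := fun _ ↦ ((d : ℝ) - s) / d)
      (fun _ _ ↦ norm_nonneg _) fun j hj ↦ by
        rw [mem_Ioc] at hj
        exact norm_factor_le_of_le_of_le hz (by omega) hj.2 (by omega)
    rwa [prod_const, Nat.card_Ioc, show d - (s - 1) = d + 1 - s by omega] at h
  have hhigh := prod_Ioc_norm_factor_le hz hsd hdn
  rw [hsplit F, hsplit G]
  calc _ ≤ (∏ j ∈ Ioc 0 (s - 1), G j) *
        ((((d : ℝ) - s) / d) ^ (d + 1 - s) * ∏ j ∈ Ioc (s - 1) d, G j) *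
        ((2 * d / ((n : ℝ) - d + 2)) ^ (2 * s) * ∏ j ∈ Ioc d (n - 1), G j) := by
        gcongr ?_ * ?_ * ?_
    _ = _ := by ring

end Factors

noncomputable def hyperWeight (d : ℕ) (u : ℝ) (s : ℕ) : ℝ :=
  (((d : ℝ) - s) / d) ^ (d + 1 - s) * u ^ s / s.factorial

lemma norm_hyperF_zero (d n : ℕ) (z : ℂ) :
    ‖hyperF d n 0 z‖ = ∏ j ∈ Icc 1 (n - 1), ‖(d : ℂ) * z + j‖ := by
  simp [hyperF, norm_prod]

lemma norm_hyperF_zero_pos (d n : ℕ) {z : ℂ} (hz : 0 ≤ z.re) : 0 < ‖hyperF d n 0 z‖ := by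
  rw [norm_hyperF_zero]
  refine prod_pos fun j hj ↦ norm_pos_iff.2 fun h ↦ ?_
  have hre := congrArg Complex.re h
  have hj : (1 : ℝ) ≤ j := by exact_mod_cast (mem_Icc.1 hj).1
  simp only [Complex.add_re, Complex.mul_re, Complex.natCast_re, Complex.natCast_im, zero_mul,
    sub_zero, Complex.zero_re] at hre
  nlinarith [d.cast_nonneg (α := ℝ)]

lemma norm_hyperF_le {d n s : ℕ} {z : ℂ} (hz : 1 ≤ z.re) (hs : 1 ≤ s) (hsd : s < d)
    (hdn : d < n) :
    ‖hyperF d n s z‖ ≤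
      hyperWeight d (4 * d ^ 2 * n / ((n : ℝ) - d + 2) ^ 2) s * ‖hyperF d n 0 z‖ := by
  have hu : (n : ℝ) ^ s * (2 * d / ((n : ℝ) - d + 2)) ^ (2 * s) =
      (4 * d ^ 2 * n / ((n : ℝ) - d + 2) ^ 2) ^ s := by
    rw [pow_mul, ← mul_pow, div_pow, mul_pow]
    ring
  rw [hyperF, norm_mul, norm_prod, Complex.norm_natCast, norm_hyperF_zero, hyperWeight, ← hu]
  calc _ ≤ (n : ℝ) ^ s / s.factorial * ((((d : ℝ) - s) / d) ^ (d + 1 - s) *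
        (2 * d / ((n : ℝ) - d + 2)) ^ (2 * s) * ∏ j ∈ Icc 1 (n - 1), ‖(d : ℂ) * z + j‖) := by
        gcongr
        · exact Nat.choose_le_pow_div s n
        · exact prod_Icc_norm_factor_le hz hs hsd hdn
    _ = _ := by ring

lemma Real.one_sub_pow_le_exp_neg_mul {x : ℝ} (hx : x ≤ 1) (k : ℕ) :
    (1 - x) ^ k ≤ exp (-(x * k)) := by
  calc (1 - x) ^ k ≤ exp (-x) ^ k :=
        pow_le_pow_left₀ (sub_nonneg.2 hx) (one_sub_le_exp_neg x) k
    _ = exp (-(x * k)) := by rw [← exp_nat_mul]; ring_nf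

lemma Real.exp_neg_le_inv_taylor {c : ℝ} (hc : 0 ≤ c) :
    exp (-c) ≤ (1 + c + c ^ 2 / 2 + c ^ 3 / 6)⁻¹ := by
  have h := sum_le_exp_of_nonneg hc 4
  norm_num [sum_range_succ, Nat.factorial] at h
  rw [exp_neg]
  exact inv_anti₀ (by positivity) (by linarith)

lemma Real.exp_four_thirds_lt : exp (4 / 3) < 3.8 := by
  have h := exp_bound' (x := 1 / 3) (by norm_num) (by norm_num) (n := 3) (by norm_num)
  norm_num [sum_range_succ, Nat.factorial] at h
  have he := exp_one_lt_d9
  rw [show (4 / 3 : ℝ) = 1 + 1 / 3 by norm_num, exp_add]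
  nlinarith [exp_pos 1]

lemma hyperWeight_le {d s : ℕ} {u v c : ℝ} (hd : 0 < d) (hsd : s ≤ d) (hu : 0 ≤ u)
    (huv : u ≤ v) (hc : 0 ≤ c) (hcs : c * d ≤ s * ((d : ℝ) + 1 - s)) :
    hyperWeight d u s ≤ (1 + c + c ^ 2 / 2 + c ^ 3 / 6)⁻¹ * v ^ s / s.factorial := by
  have hd' : (0 : ℝ) < d := by exact_mod_cast hd
  have hbase : ((d : ℝ) - s) / d = 1 - s / d := by field_simp
  have hexp : -(s / d * ((d + 1 - s : ℕ) : ℝ)) ≤ -c := by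
    rw [Nat.cast_sub (by omega)]
    push_cast
    rw [neg_le_neg_iff, div_mul_eq_mul_div, le_div_iff₀ hd']
    linarith
  have hlam : (((d : ℝ) - s) / d) ^ (d + 1 - s) ≤ (1 + c + c ^ 2 / 2 + c ^ 3 / 6)⁻¹ := by
    rw [hbase]
    refine (one_sub_pow_le_exp_neg_mul ?_ _).trans
      ((exp_le_exp.2 hexp).trans (exp_neg_le_inv_taylor hc))
    rw [div_le_one hd']
    exact_mod_cast hsd
  rw [hyperWeight]
  gcongr

lemma sum_hyperWeight_four_lt_one {u : ℝ} (hu0 : 0 ≤ u) (hu : u ≤ 8 / 5) :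
    ∑ s ∈ Ico 1 4, hyperWeight 4 u s < 1 := by
  norm_num [sum_Ico_succ_top, hyperWeight, Nat.factorial]
  nlinarith [pow_le_pow_left₀ hu0 hu 2, pow_le_pow_left₀ hu0 hu 3]

lemma sum_hyperWeight_lt_one_of_five_le {d : ℕ} {u : ℝ} (hd : 5 ≤ d) (hu0 : 0 ≤ u)
    (hu : u ≤ 4 / 3) : ∑ s ∈ Ico 1 d, hyperWeight d u s < 1 := by
  have hd' : (5 : ℝ) ≤ d := by exact_mod_cast hd
  -- `c = 1, 8/5, 9/5` satisfy `c d ≤ s (d + 1 - s)` for `s = 1, 2, 3` as soon as `d ≥ 5`.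
  have hhead : ∑ s ∈ Ico 1 4, hyperWeight d u s ≤ 0.77 := by
    have h1 := hyperWeight_le (d := d) (s := 1) (c := 1) (by omega) (by omega) hu0 hu
      (by norm_num) (by push_cast; linarith)
    have h2 := hyperWeight_le (d := d) (s := 2) (c := 8 / 5) (by omega) (by omega) hu0 hu
      (by norm_num) (by push_cast; linarith)
    have h3 := hyperWeight_le (d := d) (s := 3) (c := 9 / 5) (by omega) (by omega) hu0 hu
      (by norm_num) (by push_cast; linarith)
    norm_num [sum_Ico_succ_top, Nat.factorial] at h1 h2 h3 ⊢
    linarith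
  have htail : ∑ s ∈ Ico 4 d, hyperWeight d u s ≤ exp (4 / 3) - 293 / 81 := by
    have hle : ∑ s ∈ Ico 4 d, hyperWeight d u s ≤
        ∑ s ∈ Ico 4 d, (4 / 3 : ℝ) ^ s / s.factorial := by
      refine sum_le_sum fun s hs ↦ ?_
      have hsd : s ≤ d := (mem_Ico.1 hs).2.le
      have hsd' : (s : ℝ) ≤ d := by exact_mod_cast hsd
      simpa using hyperWeight_le (c := 0) (by omega) hsd hu0 hu le_rfl
        (by nlinarith [s.cast_nonneg (α := ℝ)])
    have hexp := sum_le_exp_of_nonneg (x := 4 / 3) (by norm_num) d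
    rw [← sum_range_add_sum_Ico _ (by omega : 4 ≤ d)] at hexp
    norm_num [sum_range_succ, Nat.factorial] at hexp
    linarith
  rw [← sum_Ico_consecutive _ (by omega : 1 ≤ 4) (by omega : 4 ≤ d)]
  linarith [exp_four_thirds_lt]

lemma three_mul_sq_mul_le_sq {c x : ℝ} (hc : 5 ≤ c) (hx : 6 * c ^ 2 - 16 * c + 13 ≤ x) :
    3 * c ^ 2 * x ≤ (x - c + 2) ^ 2 := by
  have hm : 0 ≤ x - (6 * c ^ 2 - 16 * c + 13) := by linarith
  have h1 : 0 ≤ 9 * c ^ 2 - 34 * c + 30 := by nlinarith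
  have h2 : 0 ≤ 3 * c ^ 2 - 18 * c + 17 := by nlinarith
  have h3 : 0 ≤ 6 * c ^ 2 - 16 * c + 13 := by nlinarith
  nlinarith [mul_nonneg hm h1, mul_nonneg h3 h2, sq_nonneg (x - (6 * c ^ 2 - 16 * c + 13))]

lemma sum_hyperWeight_lt_one {d n : ℕ} (hd : 4 ≤ d) (hn : 6 * (d : ℤ) ^ 2 - 16 * d + 13 ≤ n) :
    ∑ s ∈ Ico 1 d, hyperWeight d (4 * d ^ 2 * n / ((n : ℝ) - d + 2) ^ 2) s < 1 := by
  have hnR : 6 * (d : ℝ) ^ 2 - 16 * d + 13 ≤ n := by exact_mod_cast hn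
  have hdR : (4 : ℝ) ≤ d := by exact_mod_cast hd
  have hpos : 0 < (n : ℝ) - d + 2 := by nlinarith
  have hu0 : 0 ≤ 4 * (d : ℝ) ^ 2 * n / ((n : ℝ) - d + 2) ^ 2 := by positivity
  rcases hd.eq_or_lt with rfl | hd5
  · refine sum_hyperWeight_four_lt_one hu0 ?_
    rw [div_le_iff₀ (by positivity)]
    push_cast at hnR ⊢
    nlinarith
  · refine sum_hyperWeight_lt_one_of_five_le hd5 hu0 ?_
    rw [div_le_iff₀ (by positivity)]
    nlinarith [three_mul_sq_mul_le_sq (c := d) (by exact_mod_cast hd5) hnR]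

theorem stmt_1 (d n : ℕ) (hd : 4 ≤ d) (hn : 6 * (d : ℤ) ^ 2 - 16 * d + 13 ≤ (n : ℤ))
    (a : ℂ) (ha : ehrhartPoly d n a = 0) :
    a.re < 1 := by
  by_contra! hre
  have hdn : d < n := by zify; nlinarith
  have hsum : ∑ s ∈ range d, (-1 : ℂ) ^ s * hyperF d n s a = 0 := by
    simpa [ehrhartPoly, Nat.factorial_ne_zero] using ha
  have hf0 : hyperF d n 0 a = -∑ s ∈ Ico 1 d, (-1 : ℂ) ^ s * hyperF d n s a := by
    rw [sum_range_eq_add_Ico _ (by omega)] at hsum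
    simpa using eq_neg_of_add_eq_zero_left hsum
  set u : ℝ := 4 * d ^ 2 * n / ((n : ℝ) - d + 2) ^ 2
  have hle : ‖hyperF d n 0 a‖ ≤ (∑ s ∈ Ico 1 d, hyperWeight d u s) * ‖hyperF d n 0 a‖ :=
    calc ‖hyperF d n 0 a‖ ≤ ∑ s ∈ Ico 1 d, ‖hyperF d n s a‖ := by
          rw [hf0, norm_neg]
          refine (norm_sum_le _ _).trans_eq ?_
          simp
      _ ≤ ∑ s ∈ Ico 1 d, hyperWeight d u s * ‖hyperF d n 0 a‖ := sum_le_sum fun s hs ↦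
          norm_hyperF_le hre (mem_Ico.1 hs).1 (mem_Ico.1 hs).2 hdn
      _ = _ := (sum_mul _ _ _).symm
  have hpos := norm_hyperF_zero_pos d n (zero_le_one.trans hre)
  nlinarith [sum_hyperWeight_lt_one hd hn]
end

section
/- Let d and n be integers with 1 ≤ d and 2d ≤ n, and let m be a positive integer. Then the number of integer points in the dilated hypersimplex m·Δ(d,n) is |m·Δ(d,n) ∩ ℤⁿ| = Σ_{s=0}^{d−1} (−1)^s · C(n,s) · C((d−s)m + n − 1 − s, n − 1), where C(a,b) denotes the binomial coefficient. -/
open Pointwise Finset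

/-- The vertex set `A` of the hypersimplex `Δ(d,n)`: all 0/1-vectors in `ℝⁿ`
with exactly `d` ones. -/
def hypersimplexVertices (d n : ℕ) : Set (Fin n → ℝ) :=
  {x | (∀ i, x i = 0 ∨ x i = 1) ∧ ∑ i, x i = (d : ℝ)}

/-- The hypersimplex `Δ(d,n)`, the convex hull of `A`. -/
def hypersimplex (d n : ℕ) : Set (Fin n → ℝ) :=
  convexHull ℝ (hypersimplexVertices d n)






lemma hull_subset_slice (d n : ℕ) :
    hypersimplex d n ⊆ {x | (∀ i, 0 ≤ x i ∧ x i ≤ 1) ∧ ∑ i, x i = (d : ℝ)} := by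
  apply convexHull_min
  · rintro x ⟨h01, hs⟩
    refine ⟨fun i => ?_, hs⟩
    rcases h01 i with h | h <;> simp [h]
  · rintro x ⟨hx1, hx2⟩ y ⟨hy1, hy2⟩ a b ha hb hab
    refine ⟨fun i => ?_, ?_⟩
    · have h1 := (hx1 i).1; have h2 := (hx1 i).2
      have h3 := (hy1 i).1; have h4 := (hy1 i).2
      constructor
      · have : (a • x + b • y) i = a * x i + b * y i := by
          simp [Pi.smul_apply, smul_eq_mul]
        rw [this]; nlinarith
      · have : (a • x + b • y) i = a * x i + b * y i := by
          simp [Pi.smul_apply, smul_eq_mul]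
        rw [this]; nlinarith
    · have : ∑ i, (a • x + b • y) i = a * ∑ i, x i + b * ∑ i, y i := by
        simp [Finset.sum_add_distrib, Finset.mul_sum]
      rw [this, hx2, hy2]
      nlinarith

lemma card_adt (n K : ℕ) (hn : 1 ≤ n) :
    (Finset.Nat.antidiagonalTuple n K).card = (K + n - 1).choose (n - 1) := by
  have e1 : {y : Fin n → ℕ // y ∈ Finset.Nat.antidiagonalTuple n K} ≃
      {y : Fin n → ℕ // ∑ i, y i = K} :=
    Equiv.subtypeEquivRight (fun y => Finset.Nat.mem_antidiagonalTuple)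
  have e2 : Sym (Fin n) K ≃ {y : Fin n → ℕ // ∑ i, y i = K} :=
    Sym.equivNatSumOfFintype (Fin n) K
  have h1 : (Finset.Nat.antidiagonalTuple n K).card = Fintype.card (Sym (Fin n) K) := by
    rw [← Fintype.card_coe]
    exact (Fintype.card_congr (e1.trans e2.symm))
  rw [h1, Sym.card_sym_fin_eq_multichoose, Nat.multichoose_eq]
  have hKle : K ≤ n + K - 1 := by omega
  have := Nat.choose_symm hKle
  have hsub : n + K - 1 - K = n - 1 := by omega
  rw [hsub] at this
  rw [← this]
  congr 1
  omega



lemma decomp (d n : ℕ) : ∀ (m : ℕ) (y : Fin n → ℕ), (∀ i, y i ≤ m) → (∑ i, y i = d * m) →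
    ∃ g : Fin m → (Fin n → ℕ), (∀ j, (∀ i, g j i ≤ 1) ∧ ∑ i, g j i = d) ∧
      ∀ i, (∑ j, g j i) = y i := by
  intro m
  induction m with
  | zero =>
    intro y hy hs
    refine ⟨Fin.elim0, fun j => j.elim0, fun i => ?_⟩
    simp
    exact (Nat.le_zero.mp (hy i)).symm
  | succ m ih =>
    intro y hy hs
    set F : Finset (Fin n) := univ.filter (fun i => y i = m + 1) with hF
    set P : Finset (Fin n) := univ.filter (fun i => 1 ≤ y i) with hP
    have hFP : F ⊆ P := by
      intro i hi
      simp only [hF, hP, mem_filter, mem_univ, true_and] at *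
      omega
    have hFd : F.card ≤ d := by
      have h1 : F.card * (m+1) = ∑ i ∈ F, y i := by
        rw [Finset.sum_congr rfl (fun i hi => ?_), Finset.sum_const, smul_eq_mul]
        simp only [hF, mem_filter] at hi; exact hi.2
      have h2 : ∑ i ∈ F, y i ≤ ∑ i, y i := Finset.sum_le_sum_of_subset (Finset.subset_univ F)
      rw [hs] at h2
      have := h1 ▸ h2
      exact Nat.le_of_mul_le_mul_right this (Nat.succ_pos m)
    have hdP : d ≤ P.card := by
      have h1 : ∑ i, y i = ∑ i ∈ P, y i := by
        refine (Finset.sum_subset (Finset.subset_univ P) ?_).symm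
        intro i _ hi
        simp only [hP, mem_filter, mem_univ, true_and] at hi
        omega
      have h2 : ∑ i ∈ P, y i ≤ P.card * (m+1) := by
        rw [← smul_eq_mul, ← Finset.sum_const]
        exact Finset.sum_le_sum (fun i _ => hy i)
      rw [h1] at hs
      have : d * (m+1) ≤ P.card * (m+1) := hs ▸ h2
      exact Nat.le_of_mul_le_mul_right this (Nat.succ_pos m)
    obtain ⟨S, hFS, hSP, hScard⟩ := Finset.exists_subsuperset_card_eq hFP hFd hdP
    set c : Fin n → ℕ := fun i => if i ∈ S then 1 else 0 with hc
    have hcy : ∀ i, c i ≤ y i := by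
      intro i
      simp only [hc]
      split
      · next h => have := hSP h; simp only [hP, mem_filter, mem_univ, true_and] at this; omega
      · omega
    have hcsum : ∑ i, c i = d := by
      simp only [hc]
      rw [Finset.sum_ite_mem, Finset.univ_inter, Finset.sum_const, smul_eq_mul, mul_one, hScard]
    set y' : Fin n → ℕ := fun i => y i - c i with hy'
    have hy'le : ∀ i, y' i ≤ m := by
      intro i
      simp only [hy', hc]
      split
      · have := hy i; omega
      · next h =>
        have hiF : i ∉ F := fun hiF => h (hFS hiF)
        simp only [hF, mem_filter, mem_univ, true_and] at hiF
        have := hy i; omega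
    have hy'sum : ∑ i, y' i = d * m := by
      have h1 : ∑ i, y' i + ∑ i, c i = ∑ i, y i := by
        rw [← Finset.sum_add_distrib]
        exact Finset.sum_congr rfl (fun i _ => by have := hcy i; simp only [hy']; omega)
      rw [hcsum, hs] at h1
      have hdm : d * (m + 1) = d * m + d := by ring
      omega
    obtain ⟨g', hg'1, hg'2⟩ := ih y' hy'le hy'sum
    refine ⟨Fin.cases c g', fun j => ?_, fun i => ?_⟩
    · refine Fin.cases ?_ ?_ j
      · refine ⟨fun i => ?_, ?_⟩
        · simp only [Fin.cases_zero, hc]; split <;> omega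
        · simpa using hcsum
      · intro j'
        simpa using hg'1 j'
    · rw [Fin.sum_univ_succ]
      simp only [Fin.cases_zero, Fin.cases_succ]
      rw [hg'2 i]
      have := hcy i
      simp only [hy']
      omega







lemma mem_smul_hull (d n m : ℕ) (hm : 1 ≤ m) (y : Fin n → ℕ)
    (hy : ∀ i, y i ≤ m) (hs : ∑ i, y i = d * m) :
    (fun i => (y i : ℝ)) ∈ (m : ℝ) • hypersimplex d n := by
  obtain ⟨g, hg1, hg2⟩ := decomp d n m y hy hs
  set v : Fin m → (Fin n → ℝ) := fun j i => (g j i : ℝ) with hv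
  have hvmem : ∀ j, v j ∈ hypersimplexVertices d n := by
    intro j
    refine ⟨fun i => ?_, ?_⟩
    · rcases Nat.le_one_iff_eq_zero_or_eq_one.mp ((hg1 j).1 i) with h | h <;> simp [hv, h]
    · have := (hg1 j).2
      simp only [hv]
      push_cast [← this]
      rfl
  have hm0 : (m : ℝ) ≠ 0 := by positivity
  set c : Fin n → ℝ := (Finset.univ : Finset (Fin m)).centerMass (fun _ => (1:ℝ)) v with hc
  have hcmem : c ∈ hypersimplex d n :=
    Finset.centerMass_mem_convexHull _ (fun _ _ => zero_le_one)
      (by simp; positivity) (fun j _ => hvmem j)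
  have hcval : (m : ℝ) • c = fun i => (y i : ℝ) := by
    have hsum1 : ∑ _j : Fin m, (1:ℝ) = (m : ℝ) := by simp
    rw [hc, Finset.centerMass, hsum1]
    rw [smul_smul, mul_inv_cancel₀ hm0, one_smul]
    funext i
    simp only [one_smul]
    rw [Finset.sum_apply]
    simp only [hv]
    rw [← Nat.cast_sum, hg2 i]
  rw [← hcval]
  exact Set.smul_mem_smul_set hcmem


lemma set_eq (d n m : ℕ) (hm : 1 ≤ m) :
    ((m : ℝ) • hypersimplex d n) ∩ {x : Fin n → ℝ | ∀ i, ∃ k : ℤ, x i = (k : ℝ)} =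
      (fun (y : Fin n → ℕ) i => (y i : ℝ)) ''
        ↑((Finset.Nat.antidiagonalTuple n (d*m)).filter (fun y => ∀ i, y i ≤ m)) := by
  ext x
  constructor
  · rintro ⟨⟨cc, hcc, rfl⟩, hint⟩
    obtain ⟨hcc1, hcc2⟩ := hull_subset_slice d n hcc
    set y : Fin n → ℕ := fun i => (Classical.choose (hint i)).toNat with hy
    have hxi : ∀ i, ((m : ℝ) • cc) i = m * cc i := fun i => rfl
    have hky : ∀ i, ((y i : ℝ)) = ((m : ℝ) • cc) i := by
      intro i
      have hk := Classical.choose_spec (hint i)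
      beta_reduce at hk
      set k : ℤ := Classical.choose (hint i) with hkdef
      have hnn : (0 : ℝ) ≤ ((m : ℝ) • cc) i := by
        rw [hxi]; exact mul_nonneg (by positivity) (hcc1 i).1
      have hpos : (0 : ℤ) ≤ k := by
        by_contra h
        push_neg at h
        rw [hk] at hnn
        have : ((k : ℝ)) < 0 := by exact_mod_cast h
        linarith
      show ((k.toNat : ℕ) : ℝ) = ((m : ℝ) • cc) i
      rw [← Int.cast_natCast, Int.toNat_of_nonneg hpos, ← hk]
    refine ⟨y, ?_, ?_⟩
    · simp only [Finset.coe_filter, Set.mem_setOf_eq, Finset.Nat.mem_antidiagonalTuple]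
      constructor
      · have : ((∑ i, y i : ℕ) : ℝ) = ((d * m : ℕ) : ℝ) := by
          push_cast
          rw [Finset.sum_congr rfl (fun i _ => hky i)]
          have : ∑ i, ((m:ℝ) • cc) i = m * ∑ i, cc i := by
            rw [Finset.sum_congr rfl (fun i _ => hxi i), ← Finset.mul_sum]
          rw [this, hcc2]; ring
        exact_mod_cast this
      · intro i
        have h1 : ((y i : ℝ)) ≤ (m : ℝ) := by
          rw [hky i, hxi]
          calc (m:ℝ) * cc i ≤ m * 1 := by
                have := (hcc1 i).2
                have hm' : (0:ℝ) ≤ m := by positivity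
                nlinarith
            _ = m := mul_one _
        exact_mod_cast h1
    · funext i
      exact hky i
  · rintro ⟨y, hy, rfl⟩
    simp only [Finset.coe_filter, Set.mem_setOf_eq, Finset.Nat.mem_antidiagonalTuple] at hy
    refine ⟨mem_smul_hull d n m hm y hy.2 hy.1, fun i => ⟨(y i : ℤ), by push_cast; rfl⟩⟩



-- count of tuples summing to K with all entries ≥ m+1 on S
lemma card_shift (n K b : ℕ) (S : Finset (Fin n)) :
    ((Finset.Nat.antidiagonalTuple n K).filter (fun y => ∀ i ∈ S, b ≤ y i)).card =
      if b * S.card ≤ K then (Finset.Nat.antidiagonalTuple n (K - b * S.card)).card else 0 := by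
  set c : Fin n → ℕ := fun i => if i ∈ S then b else 0 with hc
  have hcsum : ∑ i, c i = b * S.card := by
    simp only [hc]
    rw [Finset.sum_ite_mem, Finset.univ_inter, Finset.sum_const, smul_eq_mul]
    ring
  split
  · next h =>
    apply Finset.card_bij' (fun y _ => fun i => y i - c i) (fun z _ => fun i => z i + c i)
    · intro y hy
      simp only [mem_filter, Finset.Nat.mem_antidiagonalTuple] at hy
      obtain ⟨hy1, hy2⟩ := hy
      have hcy : ∀ i, c i ≤ y i := by
        intro i; simp only [hc]; split
        · next hi => exact hy2 i hi
        · omega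
      rw [Finset.Nat.mem_antidiagonalTuple]
      have : ∑ i, (y i - c i) + ∑ i, c i = ∑ i, y i := by
        rw [← Finset.sum_add_distrib]
        exact Finset.sum_congr rfl (fun i _ => by have := hcy i; omega)
      rw [hcsum, hy1] at this
      omega
    · intro z hz
      rw [Finset.Nat.mem_antidiagonalTuple] at hz
      simp only [mem_filter, Finset.Nat.mem_antidiagonalTuple]
      constructor
      · rw [Finset.sum_add_distrib, hz, hcsum]
        omega
      · intro i hi
        simp only [hc, if_pos hi]
        omega
    · intro y hy
      simp only [mem_filter, Finset.Nat.mem_antidiagonalTuple] at hy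
      funext i
      show y i - c i + c i = y i
      have : c i ≤ y i := by
        simp only [hc]; split
        · next hi => exact hy.2 i hi
        · omega
      omega
    · intro z _
      funext i
      show z i + c i - c i = z i
      omega
  · next h =>
    rw [Finset.card_eq_zero, Finset.filter_eq_empty_iff]
    intro y hy
    rw [Finset.Nat.mem_antidiagonalTuple] at hy
    intro hall
    apply h
    calc b * S.card = ∑ i ∈ S, b := by rw [Finset.sum_const, smul_eq_mul]; ring
      _ ≤ ∑ i ∈ S, y i := Finset.sum_le_sum (fun i hi => hall i hi)
      _ ≤ ∑ i, y i := Finset.sum_le_sum_of_subset (Finset.subset_univ S)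
      _ = K := hy

lemma ie_indicator (n m : ℕ) (y : Fin n → ℕ) :
    (if ∀ i, y i ≤ m then (1:ℤ) else 0) =
      ∑ S ∈ (Finset.univ : Finset (Fin n)).powerset,
        (if ∀ i ∈ S, m + 1 ≤ y i then (-1:ℤ)^S.card else 0) := by
  classical
  have hpow : ∀ S ∈ (Finset.univ : Finset (Fin n)).powerset,
      (if ∀ i ∈ S, m + 1 ≤ y i then (-1:ℤ)^S.card else 0) =
      (if S ⊆ univ.filter (fun i => ¬ y i ≤ m) then (-1:ℤ)^S.card else 0) := by
    intro S _
    congr 1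
    simp only [eq_iff_iff]
    constructor
    · intro hall i hi
      simp only [mem_filter, mem_univ, true_and]
      have := hall i hi; omega
    · intro hsub i hi
      have := hsub hi
      simp only [mem_filter, mem_univ, true_and] at this
      omega
  rw [Finset.sum_congr rfl hpow, ← Finset.sum_filter]
  have heq : (Finset.univ : Finset (Fin n)).powerset.filter
      (fun S => S ⊆ univ.filter (fun i => ¬ y i ≤ m)) =
      (univ.filter (fun i => ¬ y i ≤ m)).powerset := by
    ext S
    simp [Finset.mem_powerset, Finset.subset_univ]
  rw [heq, Finset.sum_powerset_neg_one_pow_card]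
  congr 1
  simp only [eq_iff_iff]
  constructor
  · intro hall
    rw [Finset.filter_eq_empty_iff]
    intro i _
    push_neg
    exact hall i
  · intro hemp i
    by_contra h
    have hmem : i ∈ Finset.filter (fun i => ¬ y i ≤ m) univ := by
      simp only [mem_filter, mem_univ, true_and]; exact h
    rw [hemp] at hmem
    exact absurd hmem (Finset.notMem_empty i)

def vAux (d n m s : ℕ) : ℤ :=
  if (m+1) * s ≤ d*m then ((d*m - (m+1)*s + n - 1).choose (n-1) : ℤ) else 0

lemma count_bounded (d n m : ℕ) (hd : 1 ≤ d) (hdn : 2 * d ≤ n) (hm : 1 ≤ m) :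
    (((((Finset.Nat.antidiagonalTuple n (d*m)).filter (fun y => ∀ i, y i ≤ m)).card : ℕ)) : ℤ) =
      ∑ s ∈ Finset.range d, (-1) ^ s * (n.choose s : ℤ) *
        (((d - s) * m + n - 1 - s).choose (n - 1) : ℤ) := by
  classical
  have hn : 1 ≤ n := by omega
  have step1 : ((((Finset.Nat.antidiagonalTuple n (d*m)).filter
        (fun y => ∀ i, y i ≤ m)).card : ℕ) : ℤ) =
      ∑ y ∈ Finset.Nat.antidiagonalTuple n (d*m), (if ∀ i, y i ≤ m then (1:ℤ) else 0) := by
    rw [Finset.card_filter]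
    push_cast
    exact Finset.sum_congr rfl (fun y _ => by split <;> simp)
  rw [step1, Finset.sum_congr rfl (fun y _ => ie_indicator n m y), Finset.sum_comm]
  have step3 : ∀ S ∈ (Finset.univ : Finset (Fin n)).powerset,
      (∑ y ∈ Finset.Nat.antidiagonalTuple n (d*m),
        if ∀ i ∈ S, m + 1 ≤ y i then (-1:ℤ)^S.card else 0) =
      (-1:ℤ)^S.card * vAux d n m S.card := by
    intro S _
    rw [← Finset.sum_filter, Finset.sum_const]
    rw [card_shift n (d*m) (m+1) S]
    rw [vAux]
    split
    · next h =>
      rw [card_adt n (d*m - (m+1)*S.card) hn]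
      simp [mul_comm]
    · simp
  rw [Finset.sum_congr rfl step3]
  have step4 : ∑ S ∈ (Finset.univ : Finset (Fin n)).powerset,
      (-1:ℤ)^S.card * vAux d n m S.card =
      ∑ s ∈ Finset.range (n+1), (n.choose s : ℤ) * ((-1:ℤ)^s * vAux d n m s) := by
    rw [Finset.sum_powerset_apply_card (fun k => (-1:ℤ)^k * vAux d n m k)]
    simp [Finset.card_univ, nsmul_eq_mul]
  rw [step4]
  clear step1 step3 step4
  have hzero : ∀ s ∈ Finset.range (n+1), s ∉ Finset.range d →
      (n.choose s : ℤ) * ((-1:ℤ)^s * vAux d n m s) = 0 := by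
    intro s hs hns
    rw [Finset.mem_range] at hs hns
    push_neg at hns
    rw [vAux]
    have h1 : (m+1) * d ≤ (m+1) * s := Nat.mul_le_mul_left (m+1) hns
    have h2 : (m+1) * d = d * m + d := by ring
    rw [if_neg (by omega)]
    ring
  have hmain : ∑ s ∈ Finset.range d, (n.choose s : ℤ) * ((-1:ℤ)^s * vAux d n m s) =
      ∑ s ∈ Finset.range (n+1), (n.choose s : ℤ) * ((-1:ℤ)^s * vAux d n m s) :=
    Finset.sum_subset (Finset.range_subset_range.mpr (by omega : d ≤ n + 1)) hzero
  rw [← hmain]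
  apply Finset.sum_congr rfl
  intro s hs
  rw [Finset.mem_range] at hs
  rw [vAux]
  have hdm : d * m = s * m + (d - s) * m := by
    rw [← Nat.add_mul]
    congr 1
    omega
  have hms : (m+1)*s = s*m + s := by ring
  have hsn : s ≤ n - 1 := by omega
  split
  · next h =>
    have hsA : s ≤ (d - s) * m := by omega
    have heq : d*m - (m+1)*s + n - 1 = (d - s) * m + n - 1 - s := by omega
    rw [heq]
    ring
  · next h =>
    have hAs : (d - s) * m < s := by omega
    have hlt : (d - s) * m + n - 1 - s < n - 1 := by omega
    rw [Nat.choose_eq_zero_of_lt hlt]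
    simp

theorem stmt_4 (d n m : ℕ) (hd : 1 ≤ d) (hdn : 2 * d ≤ n) (hm : 1 ≤ m) :
    (Set.ncard (((m : ℝ) • hypersimplex d n) ∩
        {x : Fin n → ℝ | ∀ i, ∃ k : ℤ, x i = (k : ℝ)}) : ℤ) =
      ∑ s ∈ Finset.range d, (-1) ^ s * (n.choose s : ℤ) *
        (((d - s) * m + n - 1 - s).choose (n - 1) : ℤ) := by
  rw [set_eq d n m hm]
  have hinj : Function.Injective (fun (y : Fin n → ℕ) (i : Fin n) => (y i : ℝ)) := by
    intro a b h
    funext i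
    exact Nat.cast_injective (congrFun h i)
  rw [Set.ncard_image_of_injective _ hinj, Set.ncard_coe_finset]
  exact count_bounded d n m hd hdn hm
end

section
/- Let d, n, s be integers with 1 ≤ s ≤ d − 1 and 2d ≤ n. Let α and λ be real numbers with 0 ≤ α ≤ n/d and λ ≠ 0, and set z = −α + λ·n·i. Then |f_{n,s}(z)| / |f_{n,0}(z)| < C(n,s) · ( ((d−s)² + 1/λ²) / d² )^{(n−1)/2}. (Here f_{n,0}(z) ≠ 0 since each factor d·z + j has imaginary part d·λ·n ≠ 0.) -/
open Finset

theorem norm_hyperF (d n s : ℕ) (z : ℂ) :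
    ‖hyperF d n s z‖ = n.choose s * ∏ j ∈ Icc 1 (n - 1), ‖((d : ℂ) - s) * z + j - s‖ := by
  rw [hyperF, norm_mul, norm_prod, Complex.norm_natCast]

theorem sq_norm_hyperF_factor (d s j : ℕ) (z : ℂ) :
    ‖((d : ℂ) - s) * z + j - s‖ ^ 2 = ((j : ℝ) - s + (d - s) * z.re) ^ 2 + ((d - s) * z.im) ^ 2 := by
  rw [Complex.sq_norm, Complex.normSq_apply]
  simp only [Complex.sub_re, Complex.add_re, Complex.mul_re, Complex.natCast_re, Complex.sub_im,
    Complex.natCast_im, sub_self, zero_mul, sub_zero, Complex.add_im, Complex.mul_im, add_zero]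
  ring

theorem abs_sub_sub_mul_lt {j s d n α : ℝ} (hj : 0 < j) (hjn : j < n) (hs : 0 ≤ s) (hsd : s ≤ d)
    (hd : 0 < d) (hdn : d ≤ n) (hα0 : 0 ≤ α) (hα1 : α ≤ n / d) : |j - s - (d - s) * α| < n := by
  have hds : 0 ≤ d - s := sub_nonneg.2 hsd
  have hnd : 1 ≤ n / d := (one_le_div hd).2 hdn
  have hmul : (d - s) * α ≤ n - s :=
    calc (d - s) * α ≤ (d - s) * (n / d) := mul_le_mul_of_nonneg_left hα1 hds
      _ = n - s * (n / d) := by field_simp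
      _ ≤ n - s := by nlinarith
  rw [abs_lt]
  constructor <;> nlinarith [mul_nonneg hds hα0]

theorem sq_add_sq_lt_mul {x y a d lam n : ℝ} (hd : d ≠ 0) (hlam : lam ≠ 0) (hx : |x| < n) :
    x ^ 2 + (a * (lam * n)) ^ 2 < (a ^ 2 + 1 / lam ^ 2) / d ^ 2 * (y ^ 2 + (d * (lam * n)) ^ 2) := by
  have hxn : x ^ 2 < n ^ 2 := sq_lt_sq' (abs_lt.1 hx).1 (abs_lt.1 hx).2
  have hexpand : (a ^ 2 + 1 / lam ^ 2) / d ^ 2 * (y ^ 2 + (d * (lam * n)) ^ 2) =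
      (a ^ 2 + 1 / lam ^ 2) * (y / d) ^ 2 + (a * (lam * n)) ^ 2 + n ^ 2 := by
    field_simp
    ring
  rw [hexpand]
  have : 0 ≤ (a ^ 2 + 1 / lam ^ 2) * (y / d) ^ 2 := by positivity
  linarith

theorem Finset.prod_lt_pow_card_mul_prod {ι : Type*} {s : Finset ι} (hs : s.Nonempty)
    {f g : ι → ℝ} {c : ℝ} (hf : ∀ i ∈ s, 0 < f i) (hfg : ∀ i ∈ s, f i < c * g i) :
    ∏ i ∈ s, f i < c ^ #s * ∏ i ∈ s, g i := by
  rw [← prod_const, ← prod_mul_distrib]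
  exact prod_lt_prod_of_nonempty hf hfg hs

section Factor

variable {d n s j : ℕ} {α lam : ℝ}

theorem norm_hyperF_factor_pos (hsd : s < d) (hn : 0 < n) (hlam : lam ≠ 0) :
    0 < ‖((d : ℂ) - s) * (-(α : ℂ) + (lam : ℂ) * n * Complex.I) + j - s‖ := by
  refine norm_pos_iff.2 fun h => ?_
  have hsq := sq_norm_hyperF_factor d s j (-(α : ℂ) + (lam : ℂ) * n * Complex.I)
  rw [h, norm_zero] at hsq
  have him : ((d : ℝ) - s) * (-(α : ℂ) + (lam : ℂ) * n * Complex.I).im ≠ 0 := by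
    have : (s : ℝ) < d := by exact_mod_cast hsd
    simp [hlam, hn.ne', sub_ne_zero.2 this.ne']
  have : 0 < (((d : ℝ) - s) * (-(α : ℂ) + (lam : ℂ) * n * Complex.I).im) ^ 2 := by positivity
  nlinarith

theorem norm_hyperF_factor_lt (hsd : s ≤ d) (hd : 0 < d) (hdn : d ≤ n) (hj : 0 < j) (hjn : j < n)
    (hα0 : 0 ≤ α) (hα1 : α ≤ (n : ℝ) / d) (hlam : lam ≠ 0) :
    ‖((d : ℂ) - s) * (-(α : ℂ) + (lam : ℂ) * n * Complex.I) + j - s‖ <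
      √((((d : ℝ) - s) ^ 2 + 1 / lam ^ 2) / (d : ℝ) ^ 2) *
        ‖(d : ℂ) * (-(α : ℂ) + (lam : ℂ) * n * Complex.I) + j‖ := by
  set z : ℂ := -(α : ℂ) + (lam : ℂ) * n * Complex.I
  have hre : z.re = -α := by simp [z]
  have him : z.im = lam * n := by simp [z]
  have hx := abs_sub_sub_mul_lt (j := (j : ℝ)) (by exact_mod_cast hj) (by exact_mod_cast hjn)
    (Nat.cast_nonneg s) (by exact_mod_cast hsd) (by exact_mod_cast hd) (by exact_mod_cast hdn)
    hα0 hα1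
  have hkey := sq_add_sq_lt_mul (y := (j : ℝ) - d * α) (a := (d : ℝ) - s)
    (Nat.cast_ne_zero.2 hd.ne') hlam hx
  have h0 := sq_norm_hyperF_factor d 0 j z
  simp only [Nat.cast_zero, sub_zero] at h0
  refine lt_of_pow_lt_pow_left₀ 2 (by positivity) ?_
  rw [mul_pow, Real.sq_sqrt (by positivity), sq_norm_hyperF_factor, h0, hre, him]
  exact lt_of_eq_of_lt (by ring) (hkey.trans_eq (by ring))

end Factor

theorem stmt_7 (d n s : ℕ) (hs : 1 ≤ s) (hs' : s ≤ d - 1) (hn : 2 * d ≤ n)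
    (α lam : ℝ) (hα0 : 0 ≤ α) (hα1 : α ≤ (n : ℝ) / d) (hlam : lam ≠ 0) :
    ‖hyperF d n s (-(α : ℂ) + (lam : ℂ) * n * Complex.I)‖ /
        ‖hyperF d n 0 (-(α : ℂ) + (lam : ℂ) * n * Complex.I)‖ <
      (n.choose s : ℝ) * ((((d : ℝ) - s) ^ 2 + 1 / lam ^ 2) / (d : ℝ) ^ 2) ^ (((n : ℝ) - 1) / 2) := by
  set z : ℂ := -(α : ℂ) + (lam : ℂ) * n * Complex.I
  set K : ℝ := (((d : ℝ) - s) ^ 2 + 1 / lam ^ 2) / (d : ℝ) ^ 2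
  have hsd : s < d := by omega
  have hprod : ∏ j ∈ Icc 1 (n - 1), ‖((d : ℂ) - s) * z + j - s‖ <
      √K ^ (n - 1) * ∏ j ∈ Icc 1 (n - 1), ‖(d : ℂ) * z + j‖ := by
    have := prod_lt_pow_card_mul_prod (s := Icc 1 (n - 1)) (nonempty_Icc.2 (by omega))
      (fun j _ => norm_hyperF_factor_pos hsd (by omega) hlam)
      (fun j hj => norm_hyperF_factor_lt hsd.le (by omega) (by omega) (mem_Icc.1 hj).1
        (by have := (mem_Icc.1 hj).2; omega) hα0 hα1 hlam)
    rwa [Nat.card_Icc, Nat.add_sub_cancel] at this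
  have hpow : √K ^ (n - 1) = K ^ (((n : ℝ) - 1) / 2) := by
    rw [Real.rpow_div_two_eq_sqrt _ (by positivity), ← Real.rpow_natCast,
      Nat.cast_sub (by omega : 1 ≤ n), Nat.cast_one]
  have hnorm0 : ‖hyperF d n 0 z‖ = ∏ j ∈ Icc 1 (n - 1), ‖(d : ℂ) * z + j‖ := by
    simp [norm_hyperF]
  have hpos0 : 0 < ∏ j ∈ Icc 1 (n - 1), ‖(d : ℂ) * z + j‖ := prod_pos fun j _ => by
    simpa using norm_hyperF_factor_pos (s := 0) (j := j) (α := α) (by omega) (by omega) hlam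
  rw [norm_hyperF, hnorm0, div_lt_iff₀ hpos0, ← hpow, mul_assoc]
  exact mul_lt_mul_of_pos_left hprod (by exact_mod_cast Nat.choose_pos (by omega))
end

section
/- Every complex root a of the polynomial p(z) = (z+1)·( 11(z+1)⁴ + 5(z+1)² + 4 ) satisfies |a + 1| < 1; in particular, −2 < Re(a) < 0. (This polynomial is, up to the constant factor 1/20, the Ehrhart polynomial i(Δ(3,6), z) of the hypersimplex Δ(3,6).) -/
/-!
Put `w = a + 1`. Apart from `w = 0`, the square `t = w ^ 2` is a root of `11 t² + 5 t + 4`.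
The imaginary part of that equation reads `Im t · (22 Re t + 5) = 0`; a real root is excluded
by the negative discriminant, so `Re t` is the vertex `-5/22`, and there the real part of the
equation becomes `11 ‖t‖² = 4`. Hence `‖w‖ ^ 4 = 4 / 11 < 1`, and `|Re a + 1| ≤ ‖w‖ < 1`.
-/

open Complex

theorem Complex.mul_normSq_eq_of_quadratic_eq_zero {a b c : ℝ} (hd : discrim a b c < 0) {t : ℂ}
    (ht : a * t ^ 2 + b * t + c = 0) : a * normSq t = c := by
  have hre := congrArg re ht
  have him := congrArg im ht
  simp only [add_re, add_im, mul_re, mul_im, ofReal_re, ofReal_im, pow_two, zero_mul, sub_zero,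
    add_zero, zero_re, zero_im] at hre him
  have him' : t.im * (2 * a * t.re + b) = 0 := by linarith
  have hvertex : 2 * a * t.re + b = 0 := by
    rcases mul_eq_zero.mp him' with hy | hvertex
    · rw [hy] at hre
      have := discrim_eq_sq_of_quadratic_eq_zero (a := a) (b := b) (c := c) (x := t.re)
        (by linarith)
      nlinarith [sq_nonneg (2 * a * t.re + b)]
    · exact hvertex
  rw [normSq_apply]
  linear_combination t.re * hvertex - hre

theorem norm_lt_one_of_mul_quartic_eq_zero {w : ℂ} (hw : w * (11 * w ^ 4 + 5 * w ^ 2 + 4) = 0) :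
    ‖w‖ < 1 := by
  rcases mul_eq_zero.mp hw with rfl | hquartic
  · simp
  have hquad : (11 : ℝ) * (w ^ 2) ^ 2 + (5 : ℝ) * w ^ 2 + (4 : ℝ) = 0 := by
    push_cast; linear_combination hquartic
  have hd : discrim (11 : ℝ) 5 4 < 0 := by norm_num [discrim]
  have hnorm : ‖w‖ ^ 4 = 4 / 11 := by
    have := mul_normSq_eq_of_quadratic_eq_zero hd hquad
    rw [normSq_eq_norm_sq, norm_pow] at this
    linarith
  exact (pow_lt_one_iff_of_nonneg (norm_nonneg w) (n := 4) (by norm_num)).mp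
    (by rw [hnorm]; norm_num)

theorem stmt_9 (a : ℂ) (ha : (a + 1) * (11 * (a + 1) ^ 4 + 5 * (a + 1) ^ 2 + 4) = 0) :
    ‖a + 1‖ < 1 ∧ -2 < a.re ∧ a.re < 0 := by
  have hnorm := norm_lt_one_of_mul_quartic_eq_zero ha
  have hre : |a.re + 1| < 1 := by
    simpa using (abs_re_le_norm (a + 1)).trans_lt hnorm
  obtain ⟨hlow, hhigh⟩ := abs_lt.mp hre
  exact ⟨hnorm, by linarith, by linarith⟩
end

section
/- For every integer d ≥ 4, one has ( (d² + 2d)^{d−1} / (d−1)! ) · (1/d)^{d+1} · ∏_{k=1}^{d−1} (d+1+k)/(d²+d+k) < 1/(d−1). -/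
/-!
Each factor satisfies `(d + 1 + k) / (d² + d + k) ≤ (k + 1) / (d + 2)`, so the product is at most
`d! / (d + 2)^(d - 1)`. Since `d² + 2d = d (d + 2)`, the powers of `d + 2` cancel and the left-hand
side is at most `d^(d - 1) · d! / ((d - 1)! · d^(d + 1)) = 1 / d < 1 / (d - 1)`.
-/

open Finset Nat

lemma prod_Icc_one_natCast_add_one {R : Type*} [CommSemiring R] (n : ℕ) :
    ∏ k ∈ Icc 1 n, ((k : R) + 1) = ((n + 1)! : R) := by
  induction n with
  | zero => simp
  | succ n ih =>
    rw [prod_Icc_succ_top (by omega), ih, factorial_succ (n + 1)]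
    push_cast
    ring

lemma add_one_add_div_sq_add_add_le {x k : ℝ} (hx : 3 ≤ x) (hk : 1 ≤ k) :
    (x + 1 + k) / (x ^ 2 + x + k) ≤ (k + 1) / (x + 2) := by
  rw [div_le_div_iff₀ (by positivity) (by positivity)]
  nlinarith [mul_le_mul_of_nonneg_left hx (sub_nonneg.2 hk)]

lemma prod_Icc_add_one_add_div_sq_add_add_le {x : ℝ} (hx : 3 ≤ x) (n : ℕ) :
    ∏ k ∈ Icc 1 n, (x + 1 + k) / (x ^ 2 + x + k) ≤ ((n + 1)! : ℝ) / (x + 2) ^ n := by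
  calc ∏ k ∈ Icc 1 n, (x + 1 + k) / (x ^ 2 + x + k)
      ≤ ∏ k ∈ Icc 1 n, ((k : ℝ) + 1) / (x + 2) := by
        refine prod_le_prod (fun k _ => by positivity) fun k hk => ?_
        exact add_one_add_div_sq_add_add_le hx (by exact_mod_cast (mem_Icc.1 hk).1)
    _ = ((n + 1)! : ℝ) / (x + 2) ^ n := by
        rw [prod_div_distrib, prod_Icc_one_natCast_add_one, prod_const, card_Icc,
          Nat.add_sub_cancel]

lemma sq_add_two_mul_pow_div_factorial_mul_factorial_div_pow {x : ℝ} (hx : x ≠ 0)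
    (hx₂ : x + 2 ≠ 0) (m : ℕ) :
    (x ^ 2 + 2 * x) ^ m / (m ! : ℝ) * (1 / x) ^ (m + 2) * (((m + 1)! : ℝ) / (x + 2) ^ m) =
      (m + 1) / x ^ 2 := by
  rw [show x ^ 2 + 2 * x = x * (x + 2) by ring, mul_pow, factorial_succ]
  push_cast
  rw [one_div, inv_pow]
  field_simp
  ring

theorem stmt_14 (d : ℕ) (hd : 4 ≤ d) :
    ((d : ℝ) ^ 2 + 2 * d) ^ (d - 1) / ((d - 1).factorial : ℝ) * (1 / (d : ℝ)) ^ (d + 1) *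
        ∏ k ∈ Finset.Icc 1 (d - 1), ((d : ℝ) + 1 + k) / ((d : ℝ) ^ 2 + d + k) <
      1 / ((d : ℝ) - 1) := by
  obtain ⟨m, rfl⟩ : ∃ m, d = m + 1 := ⟨d - 1, by omega⟩
  rw [Nat.add_sub_cancel]
  set x : ℝ := ((m + 1 : ℕ) : ℝ) with hx_def
  have hx : 3 ≤ x := by rw [hx_def]; exact_mod_cast (by omega : 3 ≤ m + 1)
  calc _ ≤ (x ^ 2 + 2 * x) ^ m / (m ! : ℝ) * (1 / x) ^ (m + 2) * (((m + 1)! : ℝ) / (x + 2) ^ m) := by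
        gcongr
        exact prod_Icc_add_one_add_div_sq_add_add_le hx m
    _ = 1 / x := by
        rw [sq_add_two_mul_pow_div_factorial_mul_factorial_div_pow (by positivity) (by positivity),
          hx_def]
        push_cast
        field_simp
    _ < 1 / (x - 1) := one_div_lt_one_div_of_lt (by linarith) (by linarith)
end
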